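/- Let φ₀, φ₁ be real numbers with 0 ≤ φ₀ < φ₁ ≤ π. Then p(θ) > 0 for every θ ≥ 0. -/

import Mathlib

/-! The integrand is positive on the open interval, since there the argument of `sin` runs through
`(φ₀, φ₁) ⊆ (0, π)`; the singularity of `1/√u` at `u = 0` is integrable. -/

open Real

/-- `p φ₀ δ θ = ∫_θ^{θ+δ} sin(u + φ₀ - θ)/√u du` -/
noncomputable def p (φ₀ δ θ : ℝ) : ℝ := ∫ u in θ..(θ + δ), Real.sin (u + φ₀ - θ) / Real.sqrt u

/-- For `x < 0` both sides vanish: `√x = 0`, and `x ^ (-1/2)` carries the factor `cos (π/2) = 0`. -/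
lemma inv_sqrt_eq_rpow (x : ℝ) : (√x)⁻¹ = x ^ (-(1 / 2) : ℝ) := by
  rcases le_or_gt 0 x with hx | hx
  · rw [sqrt_eq_rpow, rpow_neg hx]
  · rw [sqrt_eq_zero'.2 hx.le, inv_zero, rpow_def_of_neg hx, neg_mul, cos_neg,
      one_div_mul_eq_div, cos_pi_div_two, mul_zero]

lemma intervalIntegrable_div_sqrt {f : ℝ → ℝ} (hf : Continuous f) (a b : ℝ) :
    IntervalIntegrable (fun u => f u / √u) MeasureTheory.volume a b := by
  have hrpow : IntervalIntegrable (fun u : ℝ => u ^ (-(1 / 2) : ℝ)) MeasureTheory.volume a b :=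
    intervalIntegral.intervalIntegrable_rpow' (by norm_num)
  simpa only [div_eq_mul_inv, inv_sqrt_eq_rpow] using hrpow.continuousOn_mul hf.continuousOn

theorem stmt6 (φ₀ φ₁ : ℝ) (h0 : 0 ≤ φ₀) (h1 : φ₀ < φ₁) (h2 : φ₁ ≤ π) :
    ∀ θ : ℝ, 0 ≤ θ → 0 < p φ₀ (φ₁ - φ₀) θ := by
  intro θ hθ
  refine intervalIntegral.intervalIntegral_pos_of_pos_on
    (intervalIntegrable_div_sqrt (by fun_prop) _ _) (fun u hu => ?_) (by linarith)
  obtain ⟨hθu, huδ⟩ := hu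
  exact div_pos (sin_pos_of_pos_of_lt_pi (by linarith) (by linarith))
    (sqrt_pos.2 (hθ.trans_lt hθu))
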